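/- arXiv:2502.15036 — 3 statements merged into one kernel-verified Lean document; each statement's English description precedes it below -/
import Mathlib

section
/- The function p(x,y) = α²·σ^{2α}·(xy)^{-α-1}·exp(-(y/σ)^{-α})·1(x > y > 0) is a probability density on ℝ², i.e., it is nonnegative and its integral over ℝ² equals 1. -/
open Real MeasureTheory Set

private lemma fw_inner_int {α : ℝ} (hα : 0 < α) {y : ℝ} (hy : 0 < y) :
    ∫ x in Ioi y, x ^ (-α - 1) = y ^ (-α) / α := by
  rw [integral_Ioi_rpow_of_lt (by linarith) hy, show -α - 1 + 1 = -α by ring]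
  rw [neg_div_neg_eq]

private lemma fw_h_int {α σ : ℝ} (hσ : 0 < σ) :
    IntegrableOn (fun u : ℝ => σ ^ (2*α) * (u * Real.exp (-(σ ^ α * u)))) (Ioi 0) := by
  set b := σ ^ α with hb
  have hbpos : 0 < b := rpow_pos_of_pos hσ α
  have base : IntegrableOn (fun x : ℝ => Real.exp (-x) * x ^ ((2:ℝ) - 1)) (Ioi 0) :=
    Real.GammaIntegral_convergent two_pos
  have base' : IntegrableOn (fun x : ℝ => Real.exp (-x) * x) (Ioi 0) := by
    simpa [show (2:ℝ) - 1 = 1 by norm_num, rpow_one] using base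
  have comp : IntegrableOn (fun u : ℝ => Real.exp (-(b*u)) * (b*u)) (Ioi 0) := by
    have := (integrableOn_Ioi_comp_mul_left_iff (fun x : ℝ => Real.exp (-x) * x) 0 hbpos).mpr
      (by simpa using base')
    simpa using this
  have heq : (fun u : ℝ => σ ^ (2*α) * (u * Real.exp (-(b*u))))
      = fun u : ℝ => (σ ^ (2*α) / b) * (Real.exp (-(b*u)) * (b*u)) := by
    funext u; field_simp
  rw [heq]
  exact comp.const_mul _

private lemma fw_h_integral {α σ : ℝ} (hσ : 0 < σ) :
    ∫ u in Ioi (0:ℝ), σ ^ (2*α) * (u * Real.exp (-(σ ^ α * u))) = 1 := by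
  have hbpos : 0 < σ ^ α := rpow_pos_of_pos hσ α
  have key := integral_rpow_mul_exp_neg_mul_Ioi (two_pos) hbpos
  simp only [show (2:ℝ) - 1 = 1 by norm_num, rpow_one] at key
  rw [integral_const_mul, key, Real.Gamma_two, mul_one, one_div, ← Real.rpow_neg hσ.le,
    ← Real.rpow_mul hσ.le, ← Real.rpow_add hσ, show 2*α + -α*2 = 0 by ring, rpow_zero]

/-- The function `p(x,y) = α² σ^{2α} (xy)^{-α-1} exp(-(y/σ)^{-α}) 1(x > y > 0)`
is a probability density on `ℝ²`: it is nonnegative and integrates to one. -/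
theorem standard_frechetWelsch_density_is_probability_density
    (α σ : ℝ) (hα : 0 < α) (hσ : 0 < σ) :
    (∀ z : ℝ × ℝ,
      0 ≤ (if 0 < z.2 ∧ z.2 < z.1 then
        α ^ 2 * σ ^ (2 * α) * (z.1 * z.2) ^ (-α - 1) * Real.exp (-(z.2 / σ) ^ (-α))
        else 0)) ∧
    (∫ z : ℝ × ℝ,
      (if 0 < z.2 ∧ z.2 < z.1 then
        α ^ 2 * σ ^ (2 * α) * (z.1 * z.2) ^ (-α - 1) * Real.exp (-(z.2 / σ) ^ (-α))
        else 0)) = 1 := by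
  set f : ℝ × ℝ → ℝ := fun z =>
    if 0 < z.2 ∧ z.2 < z.1 then
      α ^ 2 * σ ^ (2 * α) * (z.1 * z.2) ^ (-α - 1) * Real.exp (-(z.2 / σ) ^ (-α))
    else 0 with hfdef
  -- auxiliary functions
  set h : ℝ → ℝ := fun u => σ ^ (2*α) * (u * Real.exp (-(σ ^ α * u))) with hhdef
  set G : ℝ → ℝ := fun y => (|(-α)| * y ^ (-α - 1)) • h (y ^ (-α)) with hGdef
  have hnn : ∀ z, 0 ≤ f z := by
    intro z
    rw [hfdef]
    dsimp only
    split_ifs with hz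
    · obtain ⟨h1, h2⟩ := hz
      have hx : 0 < z.1 := h1.trans h2
      have hxy : (0:ℝ) ≤ z.1 * z.2 := (mul_pos hx h1).le
      exact mul_nonneg (mul_nonneg (mul_nonneg (sq_nonneg α) (rpow_nonneg hσ.le _))
        (rpow_nonneg hxy _)) (Real.exp_pos _).le
    · exact le_refl 0
  have hmes : Measurable f := by
    rw [hfdef]
    apply Measurable.ite
    · exact (measurableSet_lt measurable_const measurable_snd).inter
        (measurableSet_lt measurable_snd measurable_fst)
    · fun_prop
    · exact measurable_const
  have hGnn : ∀ y ∈ Ioi (0:ℝ), 0 ≤ G y := by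
    intro y hy
    rw [hGdef]
    dsimp only
    rw [smul_eq_mul]
    exact mul_nonneg (mul_nonneg (abs_nonneg _) (rpow_nonneg (le_of_lt hy) _))
      (mul_nonneg (rpow_nonneg hσ.le _)
        (mul_nonneg (rpow_nonneg (le_of_lt hy) _) (Real.exp_pos _).le))
  have hαne : (-α : ℝ) ≠ 0 := neg_ne_zero.mpr hα.ne'
  -- inner x-integral
  have inner : ∀ y : ℝ, (∫⁻ x, ENNReal.ofReal (f (x, y)))
      = (Ioi (0:ℝ)).indicator (fun y => ENNReal.ofReal (G y)) y := by
    intro y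
    by_cases hy : 0 < y
    · rw [indicator_of_mem (mem_Ioi.mpr hy)]
      set K : ℝ := α ^ 2 * σ ^ (2 * α) * y ^ (-α - 1) * Real.exp (-(y / σ) ^ (-α)) with hK
      have hKnn : 0 ≤ K := by
        exact mul_nonneg (mul_nonneg (mul_nonneg (sq_nonneg α) (rpow_nonneg hσ.le _))
          (rpow_nonneg hy.le _)) (Real.exp_pos _).le
      have e1 : (fun x => ENNReal.ofReal (f (x, y)))
          = (Ioi y).indicator (fun x => ENNReal.ofReal (K * x ^ (-α - 1))) := by
        funext x
        by_cases hx : y < x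
        · rw [indicator_of_mem (mem_Ioi.mpr hx)]
          congr 1
          rw [hfdef]
          dsimp only
          rw [if_pos ⟨hy, hx⟩, mul_rpow (le_of_lt (hy.trans hx)) hy.le, hK]
          ring
        · rw [indicator_of_notMem (by simpa using hx), hfdef]
          dsimp only
          rw [if_neg (fun hc => hx hc.2)]
          simp
      rw [e1, lintegral_indicator measurableSet_Ioi _]
      have hint : Integrable (fun x : ℝ => K * x ^ (-α - 1)) (volume.restrict (Ioi y)) :=
        (integrableOn_Ioi_rpow_of_lt (by linarith) hy).const_mul K
      have hae : 0 ≤ᵐ[volume.restrict (Ioi y)] fun x : ℝ => K * x ^ (-α - 1) := by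
        filter_upwards [ae_restrict_mem measurableSet_Ioi] with x hx
        exact mul_nonneg hKnn (rpow_nonneg (le_of_lt (hy.trans hx)) _)
      rw [← ofReal_integral_eq_lintegral_ofReal hint hae]
      congr 1
      rw [integral_const_mul, fw_inner_int hα hy, hGdef]
      dsimp only
      rw [smul_eq_mul, hhdef]
      dsimp only
      rw [abs_neg, abs_of_pos hα, hK]
      have hexp : (y / σ) ^ (-α) = σ ^ α * y ^ (-α) := by
        rw [div_rpow hy.le hσ.le, Real.rpow_neg hσ.le, div_eq_mul_inv, inv_inv]; ring
      rw [hexp]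
      field_simp
    · rw [indicator_of_notMem (by simpa using hy)]
      have hz : ∀ x, f (x, y) = 0 := by
        intro x; rw [hfdef]; exact if_neg (fun hc => hy hc.1)
      simp [hz]
  -- total lintegral
  have key : (∫⁻ z : ℝ × ℝ, ENNReal.ofReal (f z)) = 1 := by
    rw [MeasureTheory.Measure.volume_eq_prod, lintegral_prod_symm _ (hmes.ennreal_ofReal.aemeasurable)]
    simp only [inner]
    rw [lintegral_indicator measurableSet_Ioi _]
    have hGint : IntegrableOn G (Ioi 0) := by
      rw [hGdef]
      exact (integrableOn_Ioi_comp_rpow_iff h hαne).mpr (fw_h_int hσ)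
    have hGae : 0 ≤ᵐ[volume.restrict (Ioi (0:ℝ))] G := by
      filter_upwards [ae_restrict_mem measurableSet_Ioi] with y hy
      exact hGnn y hy
    rw [← ofReal_integral_eq_lintegral_ofReal hGint hGae]
    have : ∫ y in Ioi (0:ℝ), G y = 1 := by
      rw [hGdef]
      rw [integral_comp_rpow_Ioi h hαne]
      exact fw_h_integral hσ
    rw [this, ENNReal.ofReal_one]
  refine ⟨fun z => hnn z, ?_⟩
  rw [integral_eq_lintegral_of_nonneg_ae (Filter.Eventually.of_forall hnn)
    hmes.aestronglyMeasurable, key]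
  simp
end

section
/- For each ρ₀ ∈ [0,1], the function Π_{ρ₀}(y) = 1/y - Υ_{ρ₀}'(y)/Υ_{ρ₀}(y) + ρ₀/2 - γ (with Υ_{ρ₀}(x) = ρ₀Γ(x+2) + (1-ρ₀)Γ(x+1)) is strictly decreasing on (0,∞), tends to +∞ as y → 0⁺ and to -∞ as y → ∞; hence it has a unique zero ϖ_{ρ₀} ∈ (0,∞), and since Π_{ρ₀}(1) ≤ 0 this zero satisfies ϖ_{ρ₀} ∈ (0,1]. -/
open Real Filter Set

/-- `Υ_{ρ₀}(x) = ρ₀ Γ(x+2) + (1-ρ₀) Γ(x+1)`. -/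
noncomputable def Upsilon (ρ₀ : ℝ) (x : ℝ) : ℝ :=
  ρ₀ * Real.Gamma (x + 2) + (1 - ρ₀) * Real.Gamma (x + 1)

/-- `Π_{ρ₀}(y) = 1/y - Υ_{ρ₀}'(y)/Υ_{ρ₀}(y) + ρ₀/2 - γ`. -/
noncomputable def PiFun (ρ₀ : ℝ) (y : ℝ) : ℝ :=
  1 / y - deriv (Upsilon ρ₀) y / Upsilon ρ₀ y + ρ₀ / 2 - Real.eulerMascheroniConstant

/-!
By Hölder's inequality a nonnegative combination of the log-convex functions `Γ(x + 2)` and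
`Γ(x + 1)` is log-convex, so `Υ'/Υ` is nondecreasing on `(-1, ∞)` and `Π` is strictly decreasing.
The recursion `Υ(t) = t Υ(t - 1) + ρ₀ Γ(t + 1)` bounds the slope of `log Υ` over `[t - 1, t]`
below by `log t`, hence `Υ'/Υ(t) ≥ log t` and `Π → -∞`; near `0` the term `1/y` wins.
As `Π` is the derivative of `log y - log Υ(y) + (ρ₀/2 - γ) y`, Darboux's theorem yields the zero
without any continuity of `Π`, and `Π(1) = ρ₀(ρ₀ - 1)/(2(1 + ρ₀)) ≤ 0` places it in `(0, 1]`.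
-/

open scoped Topology

theorem Real.rpow_mul_rpow_add_rpow_mul_rpow_le {a b u₁ u₂ v₁ v₂ : ℝ} (ha : 0 < a) (hb : 0 < b)
    (hab : a + b = 1) (hu₁ : 0 ≤ u₁) (hu₂ : 0 ≤ u₂) (hv₁ : 0 ≤ v₁) (hv₂ : 0 ≤ v₂) :
    u₁ ^ a * v₁ ^ b + u₂ ^ a * v₂ ^ b ≤ (u₁ + u₂) ^ a * (v₁ + v₂) ^ b := by
  have h := inner_le_Lp_mul_Lq_of_nonneg Finset.univ (HolderConjugate.inv_inv ha hb hab)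
    (f := ![u₁ ^ a, u₂ ^ a]) (g := ![v₁ ^ b, v₂ ^ b])
    (fun i _ => by fin_cases i <;> simp <;> positivity)
    (fun i _ => by fin_cases i <;> simp <;> positivity)
  simpa [Fin.sum_univ_two, ← rpow_mul, ha.ne', hb.ne', hu₁, hu₂, hv₁, hv₂] using h

theorem existsUnique_eq_zero_of_hasDerivAt_of_strictAntiOn {f F : ℝ → ℝ} {a : ℝ}
    (hF : ∀ x ∈ Ioi a, HasDerivAt F (f x) x) (hf : StrictAntiOn f (Ioi a))
    (h_right : Tendsto f (𝓝[>] a) atTop) (h_top : Tendsto f atTop atBot) :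
    ∃! y, y ∈ Ioi a ∧ f y = 0 := by
  obtain ⟨p, hp_pos, hp⟩ :=
    ((h_right.eventually (eventually_gt_atTop 0)).and self_mem_nhdsWithin).exists
  obtain ⟨q, hq_neg, hpq⟩ :=
    ((h_top.eventually (eventually_lt_atBot 0)).and (eventually_gt_atTop p)).exists
  obtain ⟨w, hw, hw_zero⟩ := exists_hasDerivWithinAt_eq_of_lt_of_gt hpq.le (f := F)
    (fun x hx => (hF x (lt_of_lt_of_le hp hx.1)).hasDerivWithinAt) hp_pos hq_neg
  have hw_mem : w ∈ Ioi a := lt_trans hp hw.1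
  exact ⟨w, ⟨hw_mem, hw_zero⟩, fun y hy => hf.injOn hy.1 hw_mem (hy.2.trans hw_zero.symm)⟩

lemma Upsilon_pos {ρ₀ : ℝ} (hρ : ρ₀ ∈ Icc (0:ℝ) 1) {x : ℝ} (hx : -1 < x) :
    0 < Upsilon ρ₀ x := by
  have hΓ₁ : 0 < Gamma (x + 1) := Gamma_pos_of_pos (by linarith)
  rcases hρ.1.eq_or_lt with rfl | hρ₀
  · simpa [Upsilon] using hΓ₁
  · exact add_pos_of_pos_of_nonneg (mul_pos hρ₀ (Gamma_pos_of_pos (by linarith)))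
      (mul_nonneg (sub_nonneg.2 hρ.2) hΓ₁.le)

lemma Upsilon_eq_mul_Upsilon_sub_one_add (ρ₀ : ℝ) {t : ℝ} (ht₀ : t ≠ 0) (ht₁ : t ≠ -1) :
    Upsilon ρ₀ t = t * Upsilon ρ₀ (t - 1) + ρ₀ * Gamma (t + 1) := by
  have hΓ₂ : Gamma (t + 2) = (t + 1) * Gamma (t + 1) := by
    rw [show t + 2 = t + 1 + 1 by ring, Gamma_add_one (by contrapose! ht₁; linarith)]
  simp only [Upsilon, show t - 1 + 2 = t + 1 by ring, sub_add_cancel, hΓ₂, Gamma_add_one ht₀]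
  ring

lemma Upsilon_one (ρ₀ : ℝ) : Upsilon ρ₀ 1 = 1 + ρ₀ := by
  have hΓ₃ : Gamma 3 = 2 := by
    rw [show (3:ℝ) = 2 + 1 by norm_num, Gamma_add_one two_ne_zero, Gamma_two]; norm_num
  norm_num [Upsilon, hΓ₃]
  ring

lemma Upsilon_mul_add_mul_le_rpow_mul_rpow {ρ₀ : ℝ} (hρ : ρ₀ ∈ Icc (0:ℝ) 1) {x y a b : ℝ}
    (hx : -1 < x) (hy : -1 < y) (ha : 0 < a) (hb : 0 < b) (hab : a + b = 1) :
    Upsilon ρ₀ (a * x + b * y) ≤ Upsilon ρ₀ x ^ a * Upsilon ρ₀ y ^ b := by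
  have hterm : ∀ {w c : ℝ}, 0 ≤ w → 0 < x + c → 0 < y + c →
      w * Gamma (a * x + b * y + c) ≤ (w * Gamma (x + c)) ^ a * (w * Gamma (y + c)) ^ b := by
    intro w c hw hxc hyc
    have hw_split : w = w ^ a * w ^ b := by
      rw [← rpow_add' hw (by rw [hab]; norm_num), hab, rpow_one]
    rw [mul_rpow hw (Gamma_pos_of_pos hxc).le, mul_rpow hw (Gamma_pos_of_pos hyc).le,
      mul_mul_mul_comm, ← hw_split, show a * x + b * y + c = a * (x + c) + b * (y + c) by
        linear_combination c * hab.symm]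
    gcongr
    exact Gamma_mul_add_mul_le_rpow_Gamma_mul_rpow_Gamma hxc hyc ha hb hab
  have hρ' : 0 ≤ 1 - ρ₀ := sub_nonneg.2 hρ.2
  calc Upsilon ρ₀ (a * x + b * y)
      ≤ (ρ₀ * Gamma (x + 2)) ^ a * (ρ₀ * Gamma (y + 2)) ^ b
        + ((1 - ρ₀) * Gamma (x + 1)) ^ a * ((1 - ρ₀) * Gamma (y + 1)) ^ b :=
        add_le_add (hterm hρ.1 (by linarith) (by linarith)) (hterm hρ' (by linarith) (by linarith))
    _ ≤ Upsilon ρ₀ x ^ a * Upsilon ρ₀ y ^ b := by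
        have hΓ : ∀ {z c}, 0 ≤ c → -1 < z → 0 ≤ c * Gamma (z + 2) ∧ 0 ≤ c * Gamma (z + 1) :=
          fun hc hz => ⟨mul_nonneg hc (Gamma_pos_of_pos (by linarith)).le,
            mul_nonneg hc (Gamma_pos_of_pos (by linarith)).le⟩
        exact rpow_mul_rpow_add_rpow_mul_rpow_le ha hb hab (hΓ hρ.1 hx).1 (hΓ hρ' hx).2
          (hΓ hρ.1 hy).1 (hΓ hρ' hy).2

theorem convexOn_log_Upsilon {ρ₀ : ℝ} (hρ : ρ₀ ∈ Icc (0:ℝ) 1) :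
    ConvexOn ℝ (Ioi (-1)) (log ∘ Upsilon ρ₀) := by
  refine convexOn_iff_forall_pos.mpr ⟨convex_Ioi _, fun x hx y hy a b ha hb hab => ?_⟩
  simp only [Function.comp_apply, smul_eq_mul]
  simp only [mem_Ioi] at hx hy
  have hUx := Upsilon_pos hρ hx
  have hUy := Upsilon_pos hρ hy
  rw [← log_rpow hUx, ← log_rpow hUy, ← log_mul (by positivity) (by positivity)]
  gcongr
  · exact Upsilon_pos hρ (by nlinarith)
  · exact Upsilon_mul_add_mul_le_rpow_mul_rpow hρ hx hy ha hb hab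

lemma hasDerivAt_Upsilon (ρ₀ : ℝ) {x : ℝ} (hx : -1 < x) :
    HasDerivAt (Upsilon ρ₀)
      (ρ₀ * deriv Gamma (x + 2) + (1 - ρ₀) * deriv Gamma (x + 1)) x := by
  have hΓ : ∀ c, 0 < x + c → HasDerivAt (fun t => Gamma (t + c)) (deriv Gamma (x + c)) x :=
    fun c hc => ((differentiableAt_Gamma fun m => by
      linarith [(Nat.cast_nonneg m : (0:ℝ) ≤ m)]).hasDerivAt).comp_add_const x c
  exact ((hΓ 2 (by linarith)).const_mul ρ₀).add ((hΓ 1 (by linarith)).const_mul (1 - ρ₀))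

lemma hasDerivAt_log_Upsilon {ρ₀ : ℝ} (hρ : ρ₀ ∈ Icc (0:ℝ) 1) {x : ℝ} (hx : -1 < x) :
    HasDerivAt (log ∘ Upsilon ρ₀) (logDeriv (Upsilon ρ₀) x) x :=
  (hasDerivAt_Upsilon ρ₀ hx).differentiableAt.hasDerivAt.log (Upsilon_pos hρ hx).ne'

lemma monotoneOn_logDeriv_Upsilon {ρ₀ : ℝ} (hρ : ρ₀ ∈ Icc (0:ℝ) 1) :
    MonotoneOn (logDeriv (Upsilon ρ₀)) (Ioi (-1)) :=
  ((convexOn_log_Upsilon hρ).monotoneOn_deriv fun _ hx =>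
    (hasDerivAt_log_Upsilon hρ hx).differentiableAt).congr fun _ hx =>
      (hasDerivAt_log_Upsilon hρ hx).deriv

lemma log_le_logDeriv_Upsilon {ρ₀ : ℝ} (hρ : ρ₀ ∈ Icc (0:ℝ) 1) {t : ℝ} (ht : 0 < t) :
    log t ≤ logDeriv (Upsilon ρ₀) t := by
  have hderiv := hasDerivAt_log_Upsilon hρ (show -1 < t by linarith)
  have hslope := (convexOn_log_Upsilon hρ).slope_le_deriv (x := t - 1) (mem_Ioi.2 (by linarith))
    (mem_Ioi.2 (by linarith)) (by linarith) hderiv.differentiableAt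
  rw [hderiv.deriv, slope_def_field, sub_sub_cancel, div_one] at hslope
  have hU := Upsilon_pos hρ (show -1 < t - 1 by linarith)
  have hle : t * Upsilon ρ₀ (t - 1) ≤ Upsilon ρ₀ t := by
    rw [Upsilon_eq_mul_Upsilon_sub_one_add ρ₀ ht.ne' (by linarith)]
    have := mul_nonneg hρ.1 (Gamma_pos_of_pos (by linarith : 0 < t + 1)).le
    linarith
  have := log_le_log (by positivity) hle
  rw [log_mul ht.ne' hU.ne'] at this
  simp only [Function.comp_apply] at hslope
  linarith

lemma PiFun_eq_one_div_sub_logDeriv (ρ₀ y : ℝ) :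
    PiFun ρ₀ y = 1 / y - logDeriv (Upsilon ρ₀) y + (ρ₀ / 2 - eulerMascheroniConstant) := by
  rw [PiFun, logDeriv_apply]
  ring

lemma strictAntiOn_PiFun {ρ₀ : ℝ} (hρ : ρ₀ ∈ Icc (0:ℝ) 1) :
    StrictAntiOn (PiFun ρ₀) (Ioi 0) := by
  intro x hx y hy hxy
  have h_inv : 1 / y < 1 / x := one_div_lt_one_div_of_lt hx hxy
  have h_log := monotoneOn_logDeriv_Upsilon hρ (mem_Ioi.2 (by linarith [mem_Ioi.1 hx]))
    (mem_Ioi.2 (by linarith [mem_Ioi.1 hy])) hxy.le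
  simp only [PiFun_eq_one_div_sub_logDeriv]
  linarith

lemma tendsto_PiFun_nhdsGT_zero {ρ₀ : ℝ} (hρ : ρ₀ ∈ Icc (0:ℝ) 1) :
    Tendsto (PiFun ρ₀) (𝓝[>] 0) atTop := by
  refine tendsto_atTop_mono' _ ?_ (tendsto_atTop_add_const_right _
    (ρ₀ / 2 - eulerMascheroniConstant - logDeriv (Upsilon ρ₀) 1)
    (by simpa only [one_div] using tendsto_inv_nhdsGT_zero (𝕜 := ℝ)))
  filter_upwards [Ioo_mem_nhdsGT one_pos] with y hy
  have h_log := monotoneOn_logDeriv_Upsilon hρ (mem_Ioi.2 (by linarith [hy.1]))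
    (mem_Ioi.2 (by norm_num)) hy.2.le
  rw [PiFun_eq_one_div_sub_logDeriv, one_div]
  linarith

lemma tendsto_PiFun_atTop {ρ₀ : ℝ} (hρ : ρ₀ ∈ Icc (0:ℝ) 1) :
    Tendsto (PiFun ρ₀) atTop atBot := by
  refine tendsto_atBot_mono' _ ?_ (tendsto_atBot_add_const_left _
    (1 + ρ₀ / 2 - eulerMascheroniConstant) (tendsto_neg_atTop_atBot.comp tendsto_log_atTop))
  filter_upwards [eventually_ge_atTop 1] with y hy
  have h_inv : 1 / y ≤ 1 := by rw [div_le_one (by linarith)]; exact hy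
  have h_log := log_le_logDeriv_Upsilon hρ (by linarith : 0 < y)
  rw [PiFun_eq_one_div_sub_logDeriv, Function.comp_apply]
  linarith

lemma hasDerivAt_log_sub_log_Upsilon {ρ₀ : ℝ} (hρ : ρ₀ ∈ Icc (0:ℝ) 1) {x : ℝ} (hx : 0 < x) :
    HasDerivAt (fun y => log y - log (Upsilon ρ₀ y)
      + (ρ₀ / 2 - eulerMascheroniConstant) * y) (PiFun ρ₀ x) x := by
  have h := ((hasDerivAt_log hx.ne').sub (hasDerivAt_log_Upsilon hρ (by linarith))).add
    ((hasDerivAt_id x).const_mul (ρ₀ / 2 - eulerMascheroniConstant))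
  refine h.congr_deriv ?_
  rw [PiFun_eq_one_div_sub_logDeriv, one_div, mul_one]

lemma PiFun_one (ρ₀ : ℝ) (hρ : ρ₀ ≠ -1) : PiFun ρ₀ 1 = ρ₀ * (ρ₀ - 1) / (2 * (1 + ρ₀)) := by
  have hΓ'₂ : deriv Gamma 2 = 1 - eulerMascheroniConstant := by
    have := deriv_Gamma_nat 1
    norm_num at this
    linear_combination this
  have hΓ'₃ : deriv Gamma 3 = 3 - 2 * eulerMascheroniConstant := by
    have := deriv_Gamma_nat 2
    norm_num [harmonic_succ] at this
    linear_combination this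
  have h1 : (1 + ρ₀) ≠ 0 := by contrapose! hρ; linarith
  rw [PiFun, (hasDerivAt_Upsilon ρ₀ (by norm_num)).deriv, Upsilon_one]
  norm_num [hΓ'₂, hΓ'₃]
  field_simp
  ring

lemma PiFun_one_nonpos {ρ₀ : ℝ} (hρ : ρ₀ ∈ Icc (0:ℝ) 1) : PiFun ρ₀ 1 ≤ 0 := by
  rw [PiFun_one ρ₀ (by linarith [hρ.1])]
  exact div_nonpos_of_nonpos_of_nonneg (by nlinarith [hρ.1, hρ.2]) (by linarith [hρ.1])

/-- For each `ρ₀ ∈ [0,1]`, the function `Π_{ρ₀}` is strictly decreasing on `(0,∞)`,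
tends to `+∞` as `y → 0⁺` and to `-∞` as `y → ∞`; hence it has a unique zero
`ϖ_{ρ₀}` in `(0,∞)`, and since `Π_{ρ₀}(1) ≤ 0` this zero lies in `(0,1]`. -/
theorem PiFun_strictAnti_unique_zero (ρ₀ : ℝ) (hρ : ρ₀ ∈ Set.Icc (0:ℝ) 1) :
    StrictAntiOn (PiFun ρ₀) (Set.Ioi (0:ℝ)) ∧
    Tendsto (PiFun ρ₀) (nhdsWithin 0 (Set.Ioi (0:ℝ))) atTop ∧
    Tendsto (PiFun ρ₀) atTop atBot ∧
    (∃! y : ℝ, y ∈ Set.Ioi (0:ℝ) ∧ PiFun ρ₀ y = 0) ∧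
    (∀ y : ℝ, y ∈ Set.Ioi (0:ℝ) → PiFun ρ₀ y = 0 → y ∈ Set.Ioc (0:ℝ) 1) := by
  have h_anti := strictAntiOn_PiFun hρ
  have h_zero := tendsto_PiFun_nhdsGT_zero hρ
  have h_top := tendsto_PiFun_atTop hρ
  refine ⟨h_anti, h_zero, h_top, existsUnique_eq_zero_of_hasDerivAt_of_strictAntiOn
    (fun _ hx => hasDerivAt_log_sub_log_Upsilon hρ hx) h_anti h_zero h_top, ?_⟩
  intro y hy hy_zero
  exact ⟨hy, (h_anti.le_iff_ge (mem_Ioi.2 one_pos) hy).1 (hy_zero ▸ PiFun_one_nonpos hρ)⟩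
end

section
/- For α₀ > 0, in the standard Fréchet-Welsch second marginal with density p⁽²⁾(y) = α₀·y^{-1-2α₀}·exp(-y^{-α₀}), the covariance of y^{-α₀} and log y equals -1/α₀. -/
/-!
Substituting `t = y ^ (-α₀)` turns `p⁽²⁾` into the Gamma density `t e^{-t}` and `log y` into
`-(log t) / α₀`, so the three integrals are `Γ(3) = 2`, `-Γ'(3) / α₀` and `-Γ'(2) / α₀`, where
`Γ'(s) = ∫ t^(s-1) log t e^{-t}`. Differentiating `Γ(s + 1) = s Γ(s)` at `s = 2` gives
`Γ'(3) = Γ(2) + 2 Γ'(2)`, so the covariance is `-Γ(2) / α₀ = -1 / α₀`; Euler's constant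
never appears.
-/

open Real MeasureTheory Set

namespace Real

theorem hasDerivAt_Gamma_integral {s : ℝ} (hs : 0 < s) :
    HasDerivAt Gamma (∫ t in Ioi 0, t ^ (s - 1) * log t * exp (-t)) s := by
  have hGamma : Complex.GammaIntegral =ᶠ[nhds (s : ℂ)] Complex.Gamma := by
    filter_upwards [(Complex.continuous_re.isOpen_preimage _ isOpen_Ioi).mem_nhds
      (show (0 : ℝ) < (s : ℂ).re from hs)] with z hz
    exact (Complex.Gamma_eq_integral hz).symm
  have hcomplex : (∫ t : ℝ in Ioi 0, (t : ℂ) ^ ((s : ℂ) - 1) * ((log t : ℂ) * (exp (-t) : ℂ)))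
      = ((∫ t in Ioi 0, t ^ (s - 1) * log t * exp (-t) : ℝ) : ℂ) := by
    rw [← integral_complex_ofReal]
    refine setIntegral_congr_fun measurableSet_Ioi fun t ht => ?_
    push_cast [Complex.ofReal_cpow (le_of_lt ht)]
    ring
  have := ((Complex.hasDerivAt_GammaIntegral (by simpa using hs)).congr_of_eventuallyEq
    hGamma.symm).real_of_complex
  rw [hcomplex, Complex.ofReal_re] at this
  simpa only [Complex.Gamma_ofReal, Complex.ofReal_re] using this

theorem deriv_Gamma_add_one {s : ℝ} (hs : ∀ m : ℕ, s ≠ -m) :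
    deriv Gamma (s + 1) = Gamma s + s * deriv Gamma s := by
  have hs0 : s ≠ 0 := by simpa using hs 0
  have hs1 : ∀ m : ℕ, s + 1 ≠ -m := fun m h => hs (m + 1) (by push_cast; linarith)
  have hshift : HasDerivAt (fun x => Gamma (x + 1)) (deriv Gamma (s + 1)) s :=
    ((differentiableAt_Gamma hs1).hasDerivAt).comp_add_const s 1
  have hmul : HasDerivAt (fun x => x * Gamma x) (1 * Gamma s + s * deriv Gamma s) s :=
    (hasDerivAt_id s).mul (differentiableAt_Gamma hs).hasDerivAt
  have heq : (fun x => Gamma (x + 1)) =ᶠ[nhds s] fun x => x * Gamma x := by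
    filter_upwards [isOpen_ne.mem_nhds hs0] with x hx
    exact Gamma_add_one hx
  simpa using hshift.unique (hmul.congr_of_eventuallyEq heq)

end Real

section FrechetWelsch

variable {α : ℝ}

theorem integral_comp_rpow_neg_mul_frechetWelsch (hα : 0 < α) (g : ℝ → ℝ) :
    ∫ y in Ioi 0, g (y ^ (-α)) * (α * y ^ (-1 - 2 * α) * exp (-y ^ (-α)))
      = ∫ t in Ioi 0, g t * t * exp (-t) := by
  rw [← integral_comp_rpow_Ioi (fun t => g t * t * exp (-t)) (neg_ne_zero.mpr hα.ne')]
  refine setIntegral_congr_fun measurableSet_Ioi fun y hy => ?_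
  have hpow : y ^ (-1 - 2 * α) = y ^ (-α - 1) * y ^ (-α) := by
    rw [← rpow_add hy]; ring_nf
  rw [hpow, abs_neg, abs_of_pos hα, smul_eq_mul]
  ring

theorem log_eq_neg_inv_mul_log_rpow_neg (hα : α ≠ 0) {y : ℝ} (hy : 0 < y) :
    log y = -(1 / α) * log (y ^ (-α)) := by
  rw [log_rpow hy]; field_simp

theorem integral_rpow_neg_mul_frechetWelsch (hα : 0 < α) :
    ∫ y in Ioi 0, y ^ (-α) * (α * y ^ (-1 - 2 * α) * exp (-y ^ (-α))) = 2 := by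
  calc _ = ∫ t in Ioi 0, t * t * exp (-t) := integral_comp_rpow_neg_mul_frechetWelsch hα id
    _ = Gamma 3 := by
      rw [Gamma_eq_integral three_pos]
      refine setIntegral_congr_fun measurableSet_Ioi fun t _ => ?_
      norm_num [mul_comm, sq]
    _ = 2 := by norm_num [show (3 : ℝ) = 2 + 1 by norm_num, Gamma_add_one]

theorem integral_rpow_neg_mul_log_mul_frechetWelsch (hα : 0 < α) :
    ∫ y in Ioi 0, y ^ (-α) * log y * (α * y ^ (-1 - 2 * α) * exp (-y ^ (-α)))
      = -(1 / α) * deriv Gamma 3 := by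
  calc _ = ∫ y in Ioi 0, -(1 / α) * (y ^ (-α) * log (y ^ (-α)))
          * (α * y ^ (-1 - 2 * α) * exp (-y ^ (-α))) :=
        setIntegral_congr_fun measurableSet_Ioi fun y hy => by
          rw [log_eq_neg_inv_mul_log_rpow_neg hα.ne' hy]; ring
    _ = ∫ t in Ioi 0, -(1 / α) * (t * log t) * t * exp (-t) :=
      integral_comp_rpow_neg_mul_frechetWelsch hα fun t => -(1 / α) * (t * log t)
    _ = -(1 / α) * ∫ t in Ioi 0, t ^ (3 - 1 : ℝ) * log t * exp (-t) := by
      rw [← integral_const_mul]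
      refine setIntegral_congr_fun measurableSet_Ioi fun t _ => ?_
      norm_num [sq]; ring
    _ = -(1 / α) * deriv Gamma 3 := by rw [(hasDerivAt_Gamma_integral three_pos).deriv]

theorem integral_log_mul_frechetWelsch (hα : 0 < α) :
    ∫ y in Ioi 0, log y * (α * y ^ (-1 - 2 * α) * exp (-y ^ (-α)))
      = -(1 / α) * deriv Gamma 2 := by
  calc _ = ∫ y in Ioi 0, -(1 / α) * log (y ^ (-α))
          * (α * y ^ (-1 - 2 * α) * exp (-y ^ (-α))) :=
        setIntegral_congr_fun measurableSet_Ioi fun y hy => by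
          rw [log_eq_neg_inv_mul_log_rpow_neg hα.ne' hy]
    _ = ∫ t in Ioi 0, -(1 / α) * log t * t * exp (-t) :=
      integral_comp_rpow_neg_mul_frechetWelsch hα fun t => -(1 / α) * log t
    _ = -(1 / α) * ∫ t in Ioi 0, t ^ (2 - 1 : ℝ) * log t * exp (-t) := by
      rw [← integral_const_mul]
      refine setIntegral_congr_fun measurableSet_Ioi fun t _ => ?_
      norm_num; ring
    _ = -(1 / α) * deriv Gamma 2 := by rw [(hasDerivAt_Gamma_integral two_pos).deriv]

end FrechetWelsch

/-- In the standard Fréchet-Welsch second marginal with density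
`p⁽²⁾(y) = α₀ y^{-1-2α₀} exp(-y^{-α₀})`, the covariance of `y^{-α₀}` and `log y`
equals `-1/α₀`. -/
theorem standard_frechetWelsch_cov_pow_log (α₀ : ℝ) (hα₀ : 0 < α₀) :
    (∫ y in Set.Ioi (0:ℝ),
        y ^ (-α₀) * Real.log y * (α₀ * y ^ (-1 - 2 * α₀) * Real.exp (-y ^ (-α₀))))
      - (∫ y in Set.Ioi (0:ℝ),
          y ^ (-α₀) * (α₀ * y ^ (-1 - 2 * α₀) * Real.exp (-y ^ (-α₀))))
        * (∫ y in Set.Ioi (0:ℝ),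
            Real.log y * (α₀ * y ^ (-1 - 2 * α₀) * Real.exp (-y ^ (-α₀))))
      = -(1 / α₀) := by
  have hrec := deriv_Gamma_add_one (s := 2) fun m h => by linarith [m.cast_nonneg (α := ℝ)]
  rw [Gamma_two, show (2 : ℝ) + 1 = 3 by norm_num] at hrec
  rw [integral_rpow_neg_mul_log_mul_frechetWelsch hα₀, integral_rpow_neg_mul_frechetWelsch hα₀,
    integral_log_mul_frechetWelsch hα₀, hrec]
  ring
end
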